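/- arXiv:0904.0073 — 2 statements merged into one kernel-verified Lean document; each statement's English description precedes it below -/
import Mathlib

section
/- For every n ≥ 1, every continuous function f : L₊ⁿ → [0,1] factors through the retraction r_α for some α ∈ L₊, where r_α : L₊ⁿ → [0,α]ⁿ is the product of the maps sending β to min(β, α) in each coordinate; that is, f = (f restricted to [0,α]ⁿ) ∘ r_α. -/
/-- The set of countable ordinals (ordinals less than the first uncountable ordinal `ω₁`). -/
def SOmega : Type 1 := Set.Iio (Cardinal.aleph 1).ord

noncomputable instance : LinearOrder SOmega :=
  inferInstanceAs (LinearOrder (Set.Iio (Cardinal.aleph 1).ord))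

/-- The half-open long line `L₊ = [0,1) × S_Ω` with the lexicographic order
(ordinal coordinate first, then the real coordinate). -/
def LongLinePlus : Type 1 := SOmega ×ₗ (Set.Ico (0:ℝ) 1)

noncomputable instance : LinearOrder LongLinePlus :=
  inferInstanceAs (LinearOrder (SOmega ×ₗ (Set.Ico (0:ℝ) 1)))

/-- `L₊` carries the order topology. -/
noncomputable instance : TopologicalSpace LongLinePlus := Preorder.topology LongLinePlus
instance : OrderTopology LongLinePlus := ⟨rfl⟩

/-!
For `ε > 0` the levels `α` at which some `x` has `dist (f x) (f (r_α x)) ≥ ε` are bounded.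
Otherwise there are such bad pairs `(α_k, x_k)` with `α_k` increasing and every coordinate of
`x_k` below `α_{k+1}`. Countable subsets of `L₊` are bounded (`ω₁` is regular), so `α_k`
increases to some `σ`, and all the bad pairs lie in the compact box `[0, σ]^{1+n}` (`L₊` is
conditionally complete). Projecting the closed set of bad pairs in that box shows that `(σ, y)`
is bad for some `y ≤ σ`, which is absurd because `r_σ y = y`. A common upper bound of the
thresholds for `ε = 1/(m+1)`, `m ∈ ℕ`, is then the required `α`.
-/

open Filter Topology Set Ordinal

open Classical in
noncomputable abbrev ConditionallyCompleteLinearOrder.ofExistsIsGLB (α : Type*)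
    [i : LinearOrder α] [OrderBot α] (h : ∀ s : Set α, s.Nonempty → ∃ a, IsGLB s a) :
    ConditionallyCompleteLinearOrder α where
  __ := i
  __ := LinearOrder.toLattice
  __ := letI : SupSet α := ⟨fun s => if hs : s.Nonempty ∧ BddAbove s then
      (h (upperBounds s) hs.2).choose else ⊥⟩
    conditionallyCompleteLatticeOfLatticeOfsSup α fun s hbdd hs => by
      show IsLUB s (dite _ _ _)
      rw [dif_pos ⟨hs, hbdd⟩]
      exact isGLB_upperBounds.1 (h _ hbdd).choose_spec
  csSup_of_not_bddAbove s hs := by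
    show dite _ _ _ = dite _ _ _
    rw [dif_neg fun h => hs h.2, dif_neg fun h => h.1.ne_empty rfl]
  csInf_of_not_bddBelow s hs := (hs (OrderBot.bddBelow s)).elim

theorem Prod.Lex.exists_isGLB {α β : Type*} [LinearOrder α] [WellFoundedLT α]
    [ConditionallyCompleteLinearOrder β] [OrderBot β] {s : Set (α ×ₗ β)} (hs : s.Nonempty) :
    ∃ p, IsGLB s p := by
  obtain ⟨a, ⟨p₀, hp₀, rfl⟩, ha⟩ :=
    wellFounded_lt.has_min ((fun p => (ofLex p).1) '' s) (hs.image _)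
  simp only [forall_mem_image] at ha
  set t : Set β := {b | toLex ((ofLex p₀).1, b) ∈ s}
  have ht : t.Nonempty := ⟨(ofLex p₀).2, hp₀⟩
  refine ⟨toLex ((ofLex p₀).1, sInf t), fun p hp => ?_, fun q hq => ?_⟩
  · rcases (not_lt.1 (ha hp)).lt_or_eq with hlt | heq
    · exact Prod.Lex.le_iff.2 (Or.inl hlt)
    · refine Prod.Lex.le_iff.2 (Or.inr ⟨heq, csInf_le (OrderBot.bddBelow t) ?_⟩)
      show toLex ((ofLex p₀).1, (ofLex p).2) ∈ s
      rw [heq]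
      exact hp
  · rcases (Prod.Lex.monotone_fst q p₀ (hq hp₀)).lt_or_eq with hlt | heq
    · exact Prod.Lex.le_iff.2 (Or.inl hlt)
    · refine Prod.Lex.le_iff.2 (Or.inr ⟨heq, le_csInf ht fun b hb => ?_⟩)
      exact ((Prod.Lex.le_iff.1 (hq hb)).resolve_left heq.not_lt).2

section Retraction

variable {X ι Y : Type*} [ConditionallyCompleteLinearOrder X] [OrderBot X] [TopologicalSpace X]
  [OrderTopology X] [Fintype ι]

theorem Continuous.exists_forall_ge_dist_min_lt [PseudoMetricSpace Y] {f : (ι → X) → Y}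
    (hf : Continuous f) (hbdd : ∀ u : ℕ → X, BddAbove (range u)) {ε : ℝ} (hε : 0 < ε) :
    ∃ β, ∀ α ≥ β, ∀ x, dist (f x) (f fun i => min (x i) α) < ε := by
  by_contra! h
  set g : X × (ι → X) → ℝ := fun p => dist (f p.2) (f fun i => min (p.2 i) p.1)
  have hg : Continuous g := by fun_prop
  have hbad (β : X) : ∃ p : X × (ι → X), β ≤ p.1 ∧ ε ≤ g p :=
    let ⟨α, hα, x, hx⟩ := h β; ⟨(α, x), hα, hx⟩
  choose P hP₁ hP₂ using hbad
  set next : X → X := fun β => (P β).1 ⊔ Finset.univ.sup (P β).2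
  set c : ℕ → X := fun k => next^[k] ⊥
  have hc (k : ℕ) : next (c k) = c (k + 1) := (Function.iterate_succ_apply' next k ⊥).symm
  set α : ℕ → X := fun k => (P (c k)).1
  have hα : Monotone α := monotone_nat_of_le_succ fun k =>
    (le_sup_left.trans (hc k).le).trans (hP₁ _)
  set σ := ⨆ k, α k
  have hασ : Tendsto α atTop (𝓝 σ) := tendsto_atTop_ciSup hα (hbdd α)
  have hle (k : ℕ) : P (c k) ≤ (σ, fun _ => σ) := by
    refine ⟨le_ciSup (hbdd α) k, fun i => ?_⟩
    calc (P (c k)).2 i ≤ c (k + 1) :=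
          (Finset.le_sup (Finset.mem_univ i)).trans (le_sup_right.trans (hc k).le)
      _ ≤ α (k + 1) := hP₁ _
      _ ≤ σ := le_ciSup (hbdd α) (k + 1)
  set C := Icc ⊥ (σ, fun _ => σ) ∩ {p | ε ≤ g p}
  have hC : IsCompact C := isCompact_Icc.inter_right (isClosed_le continuous_const hg)
  obtain ⟨⟨_, y⟩, ⟨⟨-, -, hy⟩, hεy⟩, rfl⟩ : σ ∈ Prod.fst '' C :=
    (hC.image continuous_fst).isClosed.mem_of_tendsto hασ
      (Eventually.of_forall fun k => ⟨P (c k), ⟨⟨bot_le, hle k⟩, hP₂ _⟩, rfl⟩)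
  have hgy : g (σ, y) = 0 := by
    simp only [g, funext fun i => min_eq_left (hy i), dist_self]
  exact hε.not_ge (hgy ▸ hεy)

theorem Continuous.exists_forall_eq_min [MetricSpace Y] {f : (ι → X) → Y} (hf : Continuous f)
    (hbdd : ∀ u : ℕ → X, BddAbove (range u)) :
    ∃ α, ∀ x, f x = f fun i => min (x i) α := by
  choose β hβ using fun m : ℕ =>
    hf.exists_forall_ge_dist_min_lt hbdd (Nat.one_div_pos_of_nat (n := m))
  obtain ⟨α, hα⟩ := hbdd β
  refine ⟨α, fun x => eq_of_forall_dist_le fun ε hε => ?_⟩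
  obtain ⟨m, hm⟩ := exists_nat_one_div_lt hε
  exact (hβ m α (hα ⟨m, rfl⟩) x).le.trans hm.le

end Retraction

instance : WellFoundedLT SOmega := inferInstanceAs (WellFoundedLT (Set.Iio _))

instance : OrderBot SOmega where
  bot := ⟨0, Cardinal.ord_pos.2 (by simp)⟩
  bot_le a := show (0 : Ordinal) ≤ a.1 from zero_le

theorem SOmega.exists_forall_lt (u : ℕ → SOmega) : ∃ a, ∀ k, u k < a := by
  have hω : (Cardinal.aleph 1).ord = ω₁ := Cardinal.ord_aleph 1
  have hsup : ⨆ k, (u k).1 < ω₁ := Ordinal.iSup_lt_omega_one fun k => hω ▸ (u k).2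
  have hsucc : Order.succ (⨆ k, (u k).1) < (Cardinal.aleph 1).ord :=
    ((Cardinal.isSuccLimit_omega 1).succ_lt hsup).trans_eq hω.symm
  exact ⟨⟨_, hsucc⟩, fun k => Order.lt_succ_of_le (le_ciSup Ordinal.bddAbove_of_small k)⟩

instance : Fact ((0 : ℝ) < 1) := ⟨one_pos⟩

instance : Inhabited (Set.Ico (0 : ℝ) 1) := ⟨⊥⟩

namespace LongLinePlus

instance : OrderBot LongLinePlus := inferInstanceAs (OrderBot (SOmega ×ₗ Set.Ico (0 : ℝ) 1))

-- Not an instance, so that `min` on `LongLinePlus` keeps elaborating through its `LinearOrder`.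
noncomputable abbrev conditionallyCompleteLinearOrder :
    ConditionallyCompleteLinearOrder LongLinePlus :=
  .ofExistsIsGLB LongLinePlus fun _ =>
    Prod.Lex.exists_isGLB (α := SOmega) (β := Set.Ico (0 : ℝ) 1)

theorem bddAbove_range (u : ℕ → LongLinePlus) : BddAbove (range u) := by
  obtain ⟨a, ha⟩ := SOmega.exists_forall_lt fun k =>
    (ofLex (show SOmega ×ₗ Set.Ico (0 : ℝ) 1 from u k)).1
  exact ⟨toLex (a, ⊥), by rintro _ ⟨k, rfl⟩; exact Prod.Lex.le_iff.2 (Or.inl (ha k))⟩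

end LongLinePlus

theorem longLinePlus_pow_continuous_factors_through_retraction_general (n : ℕ)
    (f : (Fin n → LongLinePlus) → Set.Icc (0:ℝ) 1) (hf : Continuous f) :
    ∃ α : LongLinePlus, ∀ x : Fin n → LongLinePlus,
      f x = f (fun i => min (x i) α) := by
  let := LongLinePlus.conditionallyCompleteLinearOrder
  exact hf.exists_forall_eq_min LongLinePlus.bddAbove_range

/-- For `n ≥ 1`, every continuous `f : L₊ⁿ → [0,1]` factors through the retraction
`r_α : L₊ⁿ → [0,α]ⁿ`, `r_α(x)ᵢ = min (xᵢ) α`, for some `α ∈ L₊`: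
`f = f ∘ r_α`. -/
theorem longLinePlus_pow_continuous_factors_through_retraction (n : ℕ) (hn : 1 ≤ n)
    (f : (Fin n → LongLinePlus) → Set.Icc (0:ℝ) 1) (hf : Continuous f) :
    ∃ α : LongLinePlus, ∀ x : Fin n → LongLinePlus,
      f x = f (fun i => min (x i) α) :=
  longLinePlus_pow_continuous_factors_through_retraction_general n f hf
end

section
/- Any homeomorphism h of L̄ⁿ maps the finite set W = {-Ω, Ω}ⁿ onto itself, and the induced permutation of W preserves the graph structure in which p, q ∈ W are adjacent iff they differ in exactly one coordinate; i.e., h induces an automorphism of the n-dimensional hypercube graph. -/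
/-- The strictly positive part of `L₊` (elements other than the minimum `0`). -/
def LongLinePlusPos : Type 1 := {x : LongLinePlus // ∃ y, y < x}

noncomputable instance : LinearOrder LongLinePlusPos :=
  inferInstanceAs (LinearOrder {x : LongLinePlus // ∃ y, y < x})

/-- The long line `L`: a reversed copy of `L₊ \ {0}` followed by `L₊`,
i.e. two copies of `L₊` glued at `0` with the first copy order-reversed. -/
def LongLine : Type 1 := (LongLinePlusPos)ᵒᵈ ⊕ₗ LongLinePlus

noncomputable instance : LinearOrder LongLine :=
  inferInstanceAs (LinearOrder ((LongLinePlusPos)ᵒᵈ ⊕ₗ LongLinePlus))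

noncomputable instance : TopologicalSpace LongLine := Preorder.topology LongLine
instance : OrderTopology LongLine := ⟨rfl⟩

/-- The extended long line `L̄ = {-Ω} ∪ L ∪ {Ω}`, obtained by adjoining a bottom element
`-Ω` and a top element `Ω` to `L`, with the order topology. -/
def LongLineBar : Type 1 := WithBot (WithTop LongLine)

noncomputable instance : LinearOrder LongLineBar :=
  inferInstanceAs (LinearOrder (WithBot (WithTop LongLine)))

noncomputable instance : OrderTop LongLineBar := inferInstanceAs (OrderTop (WithBot (WithTop LongLine)))
instance : OrderBot LongLineBar := inferInstanceAs (OrderBot (WithBot (WithTop LongLine)))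

noncomputable instance : TopologicalSpace LongLineBar := Preorder.topology LongLineBar
instance : OrderTopology LongLineBar := ⟨rfl⟩

/-- The inclusion `L ↪ L̄`. -/
def LongLine.toBar (x : LongLine) : LongLineBar := WithBot.some (WithTop.some x)


/-!
Separable components play the role of the paper's path components: the separable component of
`x` is the union of all preconnected separable sets containing `x`, and homeomorphisms preserve
it. In `L̄`, a bounded closed interval of `L` is separable, because it meets only countably many
levels of the long line and the points with rational real coordinate are order-dense. Conversely,
every countable subset of `L` is bounded, since `ω₁` has uncountable cofinality, so a preconnected
separable set through `±Ω` is a single point. Hence the separable component of `x ∈ L̄ⁿ` is the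
product of the factors `L` at the coordinates of `x` in `L` and `{xᵢ}` at the others, and it is a
point exactly on `W`. Two points of `W` differ in exactly one coordinate iff they lie in the
closure of a separable component with a single factor `L`: every point of such a component
disconnects it, whereas removing a point from a product with two factors `L` leaves it connected.
-/

open Set TopologicalSpace

open Classical in
noncomputable abbrev ConditionallyCompleteLinearOrder.ofExistsIsLUB (α : Type*) [LinearOrder α]
    [Nonempty α] (h : ∀ s : Set α, s.Nonempty → BddAbove s → ∃ a, IsLUB s a) :
    ConditionallyCompleteLinearOrder α where
  __ := ‹LinearOrder α›
  __ := LinearOrder.toLattice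
  sSup s := if hs : s.Nonempty ∧ BddAbove s then (h s hs.1 hs.2).choose else Classical.arbitrary α
  sInf s := if hs : s.Nonempty ∧ BddBelow s then
    (h (lowerBounds s) hs.2 hs.1.bddAbove_lowerBounds).choose else Classical.arbitrary α
  isLUB_csSup s hne hbdd := by
    rw [dif_pos ⟨hne, hbdd⟩]
    exact (h s hne hbdd).choose_spec
  isGLB_csInf s hne hbdd := by
    rw [dif_pos ⟨hne, hbdd⟩]
    exact isLUB_lowerBounds.1 (h _ hbdd hne.bddAbove_lowerBounds).choose_spec
  csSup_of_not_bddAbove s hs := by simp [hs]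
  csInf_of_not_bddBelow s hs := by simp [hs]

theorem Prod.Lex.exists_isLUB {α β : Type*} [ConditionallyCompleteLinearOrder α] [SuccOrder α]
    [ConditionallyCompleteLinearOrder β] [OrderBot β] {s : Set (α ×ₗ β)} (hs : s.Nonempty)
    (hbdd : BddAbove s) : ∃ x, IsLUB s x := by
  obtain ⟨u, hu⟩ := hbdd
  set a := sSup ((fun x => (ofLex x).1) '' s)
  have ha : IsLUB ((fun x => (ofLex x).1) '' s) a :=
    isLUB_csSup (hs.image _) ⟨(ofLex u).1, forall_mem_image.2 fun x hx => monotone_fst _ _ (hu hx)⟩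
  have hfst_le : ∀ x ∈ s, (ofLex x).1 ≤ a := fun x hx => ha.1 (mem_image_of_mem _ hx)
  have ha_le : ∀ v ∈ upperBounds s, a ≤ (ofLex v).1 :=
    fun v hv => ha.2 (forall_mem_image.2 fun x hx => monotone_fst _ _ (hv hx))
  set T := {b | toLex (a, b) ∈ s}
  have hT_bdd : ∀ v ∈ upperBounds s, (ofLex v).1 = a → (ofLex v).2 ∈ upperBounds T := by
    intro v hv hva b hb
    rcases le_iff.1 (hv hb) with h | h
    · exact absurd h (by simp [hva])
    · exact h.2
  by_cases hT : BddAbove T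
  · -- `insert ⊥ T` has the same upper bounds as `T` and is never empty.
    have hTb : IsLUB T (sSup (insert ⊥ T)) := by
      simpa [IsLUB, upperBounds_insert] using
        isLUB_csSup (insert_nonempty ⊥ T) (bddAbove_insert.2 hT)
    refine ⟨toLex (a, sSup (insert ⊥ T)), fun x hx => ?_, fun v hv => ?_⟩
    · rcases (hfst_le x hx).lt_or_eq with h | h
      · exact le_iff.2 (.inl h)
      · exact le_iff.2 (.inr ⟨h, hTb.1 (by simpa [T, ← h] using hx)⟩)
    · rcases (ha_le v hv).lt_or_eq with h | h
      · exact le_iff.2 (.inl h)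
      · exact le_iff.2 (.inr ⟨h, hTb.2 (hT_bdd v hv h.symm)⟩)
  · have h_lt : ∀ v ∈ upperBounds s, a < (ofLex v).1 := fun v hv =>
      (ha_le v hv).lt_of_ne fun h => hT ⟨_, hT_bdd v hv h.symm⟩
    refine ⟨toLex (Order.succ a, ⊥), fun x hx => ?_, fun v hv => ?_⟩
    · exact le_iff.2 (.inl ((hfst_le x hx).trans_lt
        (Order.lt_succ_of_not_isMax (h_lt u hu).not_isMax)))
    · rcases (Order.succ_le_of_lt (h_lt v hv)).lt_or_eq with h | h
      · exact le_iff.2 (.inl h)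
      · exact le_iff.2 (.inr ⟨h, bot_le⟩)

theorem Sum.Lex.exists_isLUB {α β : Type*} [ConditionallyCompleteLinearOrder α]
    [ConditionallyCompleteLinearOrder β] [OrderBot β] {s : Set (α ⊕ₗ β)} (hs : s.Nonempty)
    (hbdd : BddAbove s) : ∃ x, IsLUB s x := by
  set A := {a | toLex (Sum.inl a) ∈ s}
  set B := {b | toLex (Sum.inr b) ∈ s}
  rcases B.eq_empty_or_nonempty with hB | ⟨b₀, hb₀⟩
  · have hsA : ∀ x ∈ s, ∃ a ∈ A, x = toLex (Sum.inl a) := by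
      rintro (a | b) hx
      · exact ⟨a, hx, rfl⟩
      · exact absurd (show b ∈ B from hx) (by simp [hB])
    obtain ⟨a₀, ha₀, -⟩ := hsA _ hs.some_mem
    by_cases hA : BddAbove A
    · refine ⟨toLex (Sum.inl (sSup A)), fun x hx => ?_, ?_⟩
      · obtain ⟨a, ha, rfl⟩ := hsA x hx
        exact inl_le_inl_iff.2 (le_csSup hA ha)
      · rintro (c | c) hc
        · exact inl_le_inl_iff.2 (csSup_le ⟨a₀, ha₀⟩ fun a ha => inl_le_inl_iff.1 (hc ha))
        · exact inl_le_inr _ _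
    · refine ⟨toLex (Sum.inr ⊥), fun x hx => ?_, ?_⟩
      · obtain ⟨a, -, rfl⟩ := hsA x hx
        exact inl_le_inr _ _
      · rintro (c | c) hc
        · exact absurd ⟨c, fun a ha => inl_le_inl_iff.1 (hc ha)⟩ hA
        · exact inr_le_inr_iff.2 bot_le
  · have hB : BddAbove B := by
      obtain ⟨c | c, hc⟩ := hbdd
      · exact absurd (hc hb₀) not_inr_le_inl
      · exact ⟨c, fun b hb => inr_le_inr_iff.1 (hc hb)⟩
    refine ⟨toLex (Sum.inr (sSup B)), ?_, ?_⟩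
    · rintro (a | b) hx
      · exact inl_le_inr _ _
      · exact inr_le_inr_iff.2 (le_csSup hB hx)
    · rintro (c | c) hc
      · exact absurd (hc hb₀) not_inr_le_inl
      · exact inr_le_inr_iff.2 (csSup_le ⟨b₀, hb₀⟩ fun b hb => inr_le_inr_iff.1 (hc hb))

def OrderDense {α : Type*} [LT α] (s : Set α) : Prop :=
  ∀ ⦃a b : α⦄, a < b → ∃ c ∈ s, a < c ∧ c < b

namespace OrderDense

variable {α β : Type*}

theorem preimage_val [Preorder α] {S : Set α} [S.OrdConnected] {s : Set α} (hs : OrderDense s) :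
    OrderDense (Subtype.val ⁻¹' s : Set S) := fun a b hab =>
  let ⟨c, hc, hac, hcb⟩ := hs hab
  ⟨⟨c, OrdConnected.out' a.2 b.2 ⟨hac.le, hcb.le⟩⟩, hc, hac, hcb⟩

theorem dual [LT α] {s : Set α} (hs : OrderDense s) : OrderDense (OrderDual.ofDual ⁻¹' s) :=
  fun _ _ hab => (hs hab).imp fun _ ⟨hc, hac, hcb⟩ => ⟨hc, hcb, hac⟩

theorem prodLex [Preorder α] [Preorder β] [NoMaxOrder β] {t : Set β} (ht : OrderDense t) :
    OrderDense {x : α ×ₗ β | (ofLex x).2 ∈ t} := by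
  intro x y hxy
  rcases Prod.Lex.lt_iff.1 hxy with h | ⟨h, h'⟩
  · obtain ⟨b, hb⟩ := exists_gt (ofLex x).2
    obtain ⟨c, hc, hxc, -⟩ := ht hb
    exact ⟨toLex ((ofLex x).1, c), hc, Prod.Lex.lt_iff.2 (.inr ⟨rfl, hxc⟩),
      Prod.Lex.lt_iff.2 (.inl h)⟩
  · obtain ⟨c, hc, hxc, hcy⟩ := ht h'
    exact ⟨toLex ((ofLex x).1, c), hc, Prod.Lex.lt_iff.2 (.inr ⟨rfl, hxc⟩),
      Prod.Lex.lt_iff.2 (.inr ⟨h, hcy⟩)⟩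

theorem sumLex [LT α] [LT β] [NoMaxOrder α] {s : Set α} {t : Set β} (hs : OrderDense s)
    (ht : OrderDense t) : OrderDense {x : α ⊕ₗ β | Sum.elim (· ∈ s) (· ∈ t) (ofLex x)} := by
  rintro (a | b) (a' | b') hab
  · obtain ⟨c, hc, h⟩ := hs (Sum.Lex.inl_lt_inl_iff.1 hab)
    exact ⟨toLex (Sum.inl c), hc, Sum.Lex.inl_lt_inl_iff.2 h.1, Sum.Lex.inl_lt_inl_iff.2 h.2⟩
  · obtain ⟨a', ha'⟩ := exists_gt a
    obtain ⟨c, hc, h, -⟩ := hs ha'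
    exact ⟨toLex (Sum.inl c), hc, Sum.Lex.inl_lt_inl_iff.2 h, Sum.Lex.inl_lt_inr _ _⟩
  · exact absurd hab Sum.Lex.not_inr_lt_inl
  · obtain ⟨c, hc, h⟩ := ht (Sum.Lex.inr_lt_inr_iff.1 hab)
    exact ⟨toLex (Sum.inr c), hc, Sum.Lex.inr_lt_inr_iff.2 h.1, Sum.Lex.inr_lt_inr_iff.2 h.2⟩

theorem image_coe_withTop [Preorder α] [NoMaxOrder α] {s : Set α} (hs : OrderDense s) :
    OrderDense ((↑) '' s : Set (WithTop α)) := by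
  intro x y hxy
  induction x using WithTop.recTopCoe with
  | top => exact absurd hxy not_top_lt
  | coe a =>
    induction y using WithTop.recTopCoe with
    | top =>
      obtain ⟨b, hb⟩ := exists_gt a
      obtain ⟨c, hc, h, -⟩ := hs hb
      exact ⟨c, ⟨c, hc, rfl⟩, WithTop.coe_lt_coe.2 h, WithTop.coe_lt_top c⟩
    | coe b =>
      obtain ⟨c, hc, h⟩ := hs (WithTop.coe_lt_coe.1 hxy)
      exact ⟨c, ⟨c, hc, rfl⟩, WithTop.coe_lt_coe.2 h.1, WithTop.coe_lt_coe.2 h.2⟩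

theorem image_coe_withBot [Preorder α] [NoMinOrder α] {s : Set α} (hs : OrderDense s) :
    OrderDense ((↑) '' s : Set (WithBot α)) := by
  intro x y hxy
  induction y using WithBot.recBotCoe with
  | bot => exact absurd hxy not_lt_bot
  | coe b =>
    induction x using WithBot.recBotCoe with
    | bot =>
      obtain ⟨a, ha⟩ := exists_lt b
      obtain ⟨c, hc, -, h⟩ := hs ha
      exact ⟨c, ⟨c, hc, rfl⟩, WithBot.bot_lt_coe c, WithBot.coe_lt_coe.2 h⟩
    | coe a =>
      obtain ⟨c, hc, h⟩ := hs (WithBot.coe_lt_coe.1 hxy)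
      exact ⟨c, ⟨c, hc, rfl⟩, WithBot.coe_lt_coe.2 h.1, WithBot.coe_lt_coe.2 h.2⟩

end OrderDense

theorem orderDense_range_ratCast : OrderDense (range ((↑) : ℚ → ℝ)) := fun _ _ hab =>
  let ⟨q, h⟩ := exists_rat_btwn hab
  ⟨q, ⟨q, rfl⟩, h⟩

theorem Prod.Lex.countable_inter_Iic {α β : Type*} [Preorder α] [Preorder β] {t : Set β}
    (hα : ∀ a : α, (Iic a).Countable) (ht : t.Countable) (u : α ×ₗ β) :
    ({x : α ×ₗ β | (ofLex x).2 ∈ t} ∩ Iic u).Countable := by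
  refine (((hα (ofLex u).1).prod ht).image toLex).mono ?_
  rintro x ⟨hxt, hxu⟩
  exact ⟨ofLex x, ⟨monotone_fst _ _ hxu, hxt⟩, rfl⟩

theorem Sum.Lex.countable_inter_Icc {α β : Type*} [Preorder α] [Preorder β] {s : Set α}
    {t : Set β} (hs : ∀ a, (s ∩ Ici a).Countable) (ht : ∀ b, (t ∩ Iic b).Countable)
    (x y : α ⊕ₗ β) :
    ({z : α ⊕ₗ β | Sum.elim (· ∈ s) (· ∈ t) (ofLex z)} ∩ Icc x y).Countable := by
  set D := {z : α ⊕ₗ β | Sum.elim (· ∈ s) (· ∈ t) (ofLex z)}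
  have hl : (D ∩ Ici x ∩ range (toLex ∘ Sum.inl)).Countable := by
    rcases x with a | b
    · refine ((hs a).image (toLex ∘ Sum.inl)).mono ?_
      rintro _ ⟨⟨hz, hza⟩, c, rfl⟩
      exact ⟨c, ⟨hz, inl_le_inl_iff.1 hza⟩, rfl⟩
    · refine countable_empty.mono ?_
      rintro _ ⟨⟨-, hz⟩, c, rfl⟩
      exact not_inr_le_inl hz
  have hr : (D ∩ Iic y ∩ range (toLex ∘ Sum.inr)).Countable := by
    rcases y with a | b
    · refine countable_empty.mono ?_
      rintro _ ⟨⟨-, hz⟩, c, rfl⟩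
      exact not_inr_le_inl hz
    · refine ((ht b).image (toLex ∘ Sum.inr)).mono ?_
      rintro _ ⟨⟨hz, hzb⟩, c, rfl⟩
      exact ⟨c, ⟨hz, inr_le_inr_iff.1 hzb⟩, rfl⟩
  refine (hl.union hr).mono ?_
  rintro (a | b) ⟨hz, hxz, hzy⟩
  · exact .inl ⟨⟨hz, hxz⟩, a, rfl⟩
  · exact .inr ⟨⟨hz, hzy⟩, b, rfl⟩

theorem notMem_Ioo_bot_top_iff {α : Type*} [PartialOrder α] [BoundedOrder α] {a : α} :
    a ∉ Ioo ⊥ ⊤ ↔ a = ⊥ ∨ a = ⊤ := by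
  rw [mem_Ioo, bot_lt_iff_ne_bot, lt_top_iff_ne_top]
  tauto

theorem IsPreconnected.subset_singleton_of_subset_insert_Iic {X : Type*} [LinearOrder X]
    [DenselyOrdered X] [TopologicalSpace X] [OrderClosedTopology X] {S : Set X} {m u : X}
    (hS : IsPreconnected S) (hm : m ∈ S) (hum : u < m) (hSu : S ⊆ insert m (Iic u)) :
    S ⊆ {m} := by
  intro z hz
  rcases hSu hz with rfl | hzu
  · rfl
  obtain ⟨w, hw, hwm⟩ := exists_between (max_lt (hzu.trans_lt hum) hum)
  rcases hSu (hS.Icc_subset hz hm ⟨(le_max_left _ _).trans hw.le, hwm.le⟩) with rfl | hwu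
  · exact absurd hwm (lt_irrefl _)
  · exact absurd ((le_max_right _ _).trans_lt hw) hwu.not_gt

section SeparableComponent

variable {X Y : Type*} [TopologicalSpace X] [TopologicalSpace Y]

def separableComponent (x : X) : Set X :=
  ⋃₀ {C | x ∈ C ∧ IsPreconnected C ∧ IsSeparable C}

theorem mem_separableComponent_iff {x y : X} :
    y ∈ separableComponent x ↔ ∃ C, x ∈ C ∧ y ∈ C ∧ IsPreconnected C ∧ IsSeparable C := by
  simp only [separableComponent, mem_sUnion]
  exact ⟨fun ⟨C, ⟨hx, hC⟩, hy⟩ => ⟨C, hx, hy, hC⟩, fun ⟨C, hx, hy, hC⟩ => ⟨C, ⟨hx, hC⟩, hy⟩⟩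

theorem mem_separableComponent_self (x : X) : x ∈ separableComponent x :=
  mem_separableComponent_iff.2 ⟨{x}, rfl, rfl, isPreconnected_singleton,
    (countable_singleton x).isSeparable⟩

theorem isPreconnected_separableComponent (x : X) : IsPreconnected (separableComponent x) :=
  isPreconnected_sUnion x _ (fun _ h => h.1) fun _ h => h.2.1

theorem Continuous.image_separableComponent_subset {f : X → Y} (hf : Continuous f) (x : X) :
    f '' separableComponent x ⊆ separableComponent (f x) := by
  rintro _ ⟨y, hy, rfl⟩
  obtain ⟨C, hx, hy, hC, hCs⟩ := mem_separableComponent_iff.1 hy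
  exact mem_separableComponent_iff.2 ⟨f '' C, ⟨x, hx, rfl⟩, ⟨y, hy, rfl⟩,
    hC.image f hf.continuousOn, hCs.image hf⟩

theorem Homeomorph.image_separableComponent (e : X ≃ₜ Y) (x : X) :
    e '' separableComponent x = separableComponent (e x) := by
  refine (e.continuous.image_separableComponent_subset x).antisymm ?_
  have := e.symm.continuous.image_separableComponent_subset (e x)
  rwa [e.symm_apply_apply, image_subset_iff, e.preimage_symm] at this

theorem separableComponent_pi {ι : Type*} [Countable ι] {X : ι → Type*}
    [∀ i, TopologicalSpace (X i)] (x : ∀ i, X i) :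
    separableComponent x = univ.pi fun i => separableComponent (x i) := by
  refine Subset.antisymm (fun y hy i _ => ?_) fun y hy => ?_
  · exact (continuous_apply i).image_separableComponent_subset x ⟨y, hy, rfl⟩
  · choose C hxC hyC hC hCs using fun i => mem_separableComponent_iff.1 (hy i trivial)
    exact mem_separableComponent_iff.2 ⟨univ.pi C, fun i _ => hxC i, fun i _ => hyC i,
      isPreconnected_univ_pi hC, IsSeparable.univ_pi hCs⟩

def SeparablyAdjacent (x y : X) : Prop :=
  x ≠ y ∧ ∃ z, x ∈ closure (separableComponent z) ∧ y ∈ closure (separableComponent z) ∧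
    ∀ w ∈ separableComponent z, ¬IsPreconnected (separableComponent z \ {w})

theorem SeparablyAdjacent.map (e : X ≃ₜ Y) {x y : X} (h : SeparablyAdjacent x y) :
    SeparablyAdjacent (e x) (e y) := by
  obtain ⟨hxy, z, hx, hy, hcut⟩ := h
  refine ⟨e.injective.ne hxy, e z, ?_, ?_, ?_⟩
  · rw [← e.image_separableComponent, ← e.image_closure]
    exact ⟨x, hx, rfl⟩
  · rw [← e.image_separableComponent, ← e.image_closure]
    exact ⟨y, hy, rfl⟩
  · rw [← e.image_separableComponent]
    rintro _ ⟨w, hw, rfl⟩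
    rw [← image_singleton, ← image_sdiff e.injective, e.isPreconnected_image]
    exact hcut w hw

theorem Homeomorph.separablyAdjacent_iff (e : X ≃ₜ Y) {x y : X} :
    SeparablyAdjacent (e x) (e y) ↔ SeparablyAdjacent x y :=
  ⟨fun h => by simpa using h.map e.symm, SeparablyAdjacent.map e⟩

end SeparableComponent

section PiCutPoints

open Function

theorem isPreconnected_univ_pi_diff_singleton {ι : Type*} {X : ι → Type*}
    [∀ i, TopologicalSpace (X i)] {c : ∀ i, Set (X i)} (hc : ∀ i, IsPreconnected (c i))
    {i₁ i₂ : ι} (hi : i₁ ≠ i₂) (h₁ : (c i₁).Nontrivial) (h₂ : (c i₂).Nontrivial)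
    {w : ∀ i, X i} (hw : w ∈ univ.pi c) : IsPreconnected (univ.pi c \ {w}) := by
  classical
  have mem_slice {i : ι} {a : X i} {u : ∀ i, X i} :
      u ∈ univ.pi (update c i {a}) ↔ u i = a ∧ ∀ j ≠ i, u j ∈ c j := by
    refine ⟨fun h => ⟨by simpa using h i trivial, fun j hj => by simpa [hj] using h j trivial⟩,
      fun ⟨hi, hj⟩ j _ => ?_⟩
    rcases eq_or_ne j i with rfl | hji
    · simpa using hi
    · simpa [hji] using hj j hji
  have slice_subset {i : ι} {a : X i} (ha : a ∈ c i) (haw : a ≠ w i) :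
      univ.pi (update c i {a}) ⊆ univ.pi c \ {w} := fun u hu => by
    obtain ⟨hui, huj⟩ := mem_slice.1 hu
    refine ⟨fun j _ => ?_, fun huw => haw (hui ▸ congrFun huw i)⟩
    rcases eq_or_ne j i with rfl | hji
    · exact hui ▸ ha
    · exact huj j hji
  have slice_preconnected (i : ι) (a : X i) : IsPreconnected (univ.pi (update c i {a})) :=
    isPreconnected_univ_pi fun j => by
      rcases eq_or_ne j i with rfl | hji
      · simpa using isPreconnected_singleton
      · simpa [hji] using hc j
  obtain ⟨u₁, hu₁, hu₁w⟩ := h₁.exists_ne (w i₁)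
  obtain ⟨u₂, hu₂, hu₂w⟩ := h₂.exists_ne (w i₂)
  set b := update (update w i₁ u₁) i₂ u₂
  have hb₁ : b i₁ = u₁ := by simp [b, hi]
  have hb₂ : b i₂ = u₂ := by simp [b]
  have hb : b ∈ univ.pi c := fun j _ => by
    rcases eq_or_ne j i₂ with rfl | hj₂
    · exact hb₂ ▸ hu₂
    rcases eq_or_ne j i₁ with rfl | hj₁
    · exact hb₁ ▸ hu₁
    · simpa [b, hj₁, hj₂] using hw j trivial
  -- `v` reaches `b` through `update b i (v i)`, moving first along a free coordinate `i` where
  -- `v` differs from `w`, then along one of `i₁, i₂` other than `i`.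
  refine isPreconnected_of_forall b fun v ⟨hv, hvw⟩ => ?_
  obtain ⟨i, hvi⟩ := Function.ne_iff.1 hvw
  obtain ⟨i', hi'i, hbi'⟩ : ∃ i', i' ≠ i ∧ b i' ≠ w i' ∧ b i' ∈ c i' := by
    by_cases h : i = i₁
    · exact ⟨i₂, h ▸ hi.symm, hb₂ ▸ hu₂w, hb i₂ trivial⟩
    · exact ⟨i₁, Ne.symm h, hb₁ ▸ hu₁w, hb i₁ trivial⟩
  set m := update b i (v i)
  refine ⟨_, union_subset (slice_subset (hv i trivial) hvi) (slice_subset hbi'.2 hbi'.1),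
    .inr (mem_slice.2 ⟨rfl, fun j _ => hb j trivial⟩),
    .inl (mem_slice.2 ⟨rfl, fun j _ => hv j trivial⟩),
    (slice_preconnected i (v i)).union m (mem_slice.2 ⟨by simp [m], fun j hj => ?_⟩)
      (mem_slice.2 ⟨by simp [m, hi'i], fun j hj => ?_⟩) (slice_preconnected i' (b i'))⟩
  · simpa [m, hj] using hb j trivial
  · rcases eq_or_ne j i with rfl | hji
    · simpa [m] using hv j trivial
    · simpa [m, hji] using hb j trivial

theorem not_isPreconnected_univ_pi_diff_singleton {ι X : Type*} [LinearOrder X]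
    [TopologicalSpace X] [OrderClosedTopology X] {c : ι → Set X} {i : ι}
    (hc : ∀ j ≠ i, (c j).Subsingleton) {w : ι → X} (hw : w ∈ univ.pi c) {a b : X}
    (ha : a ∈ c i) (hb : b ∈ c i) (haw : a < w i) (hwb : w i < b) :
    ¬IsPreconnected (univ.pi c \ {w}) := by
  classical
  have hupd : ∀ x ∈ c i, x ≠ w i → update w i x ∈ univ.pi c \ {w} := fun x hx hxw =>
    ⟨(update_mem_pi_iff_of_mem hw).2 fun _ => hx, fun h => hxw (by simpa using congrFun h i)⟩
  have hcover : univ.pi c \ {w} ⊆ {v | v i < w i} ∪ {v | w i < v i} := by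
    refine fun v ⟨hv, hvw⟩ => lt_or_gt_of_ne fun h => hvw (funext fun j => ?_)
    rcases eq_or_ne j i with rfl | hji
    · exact h
    · exact hc j hji (hv j trivial) (hw j trivial)
  intro hP
  obtain ⟨v, -, hv₁, hv₂⟩ := hP {v | v i < w i} {v | w i < v i}
    (isOpen_lt (continuous_apply i) continuous_const)
    (isOpen_lt continuous_const (continuous_apply i))
    hcover ⟨_, hupd a ha haw.ne, by simpa using haw⟩ ⟨_, hupd b hb hwb.ne', by simpa using hwb⟩
  exact lt_asymm hv₁ hv₂

end PiCutPoints

theorem Ordinal.countable_Iio_of_lt_aleph_one_ord {o : Ordinal}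
    (h : o < (Cardinal.aleph 1).ord) : (Iio o).Countable := by
  rw [← Cardinal.le_aleph0_iff_set_countable, Cardinal.mk_Iio_ordinal, Cardinal.lift_le_aleph0,
    ← Order.lt_succ_iff, Cardinal.succ_aleph0]
  exact Cardinal.lt_ord.1 h

theorem Ordinal.succ_lt_aleph_one_ord {o : Ordinal} (h : o < (Cardinal.aleph 1).ord) :
    Order.succ o < (Cardinal.aleph 1).ord :=
  (Cardinal.isSuccLimit_ord (Cardinal.aleph0_le_aleph 1)).succ_lt h

namespace SOmega

instance : Inhabited SOmega :=
  ⟨show Iio (Cardinal.aleph 1).ord from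
    ⟨0, (Cardinal.isSuccLimit_ord (Cardinal.aleph0_le_aleph 1)).bot_lt⟩⟩

instance : OrderBot SOmega where
  bot := default
  bot_le a := show (0 : Ordinal) ≤ (show Iio (Cardinal.aleph 1).ord from a).1 from zero_le

noncomputable instance : ConditionallyCompleteLinearOrder SOmega :=
  letI : Inhabited (Iio (Cardinal.aleph 1).ord) := inferInstanceAs (Inhabited SOmega)
  inferInstanceAs (ConditionallyCompleteLinearOrder (Iio (Cardinal.aleph 1).ord))

noncomputable instance : SuccOrder SOmega :=
  inferInstanceAs (SuccOrder (Iio (Cardinal.aleph 1).ord))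

theorem countable_Iic (a : SOmega) : (Iic a).Countable := by
  revert a
  change ∀ a : Iio (Cardinal.aleph 1).ord, (Iic a).Countable
  rintro ⟨a, ha⟩
  refine ((Ordinal.countable_Iio_of_lt_aleph_one_ord (Ordinal.succ_lt_aleph_one_ord ha)).preimage
    Subtype.val_injective).mono ?_
  intro b hb
  exact Order.lt_succ_of_le (show b.1 ≤ a from hb)

theorem exists_forall_lt_of_countable {s : Set SOmega} (hs : s.Countable) :
    ∃ b, ∀ a ∈ s, a < b := by
  revert s
  change ∀ s : Set (Iio (Cardinal.aleph 1).ord), s.Countable → ∃ b, ∀ a ∈ s, a < b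
  intro s hs
  have := hs.to_subtype
  have hsup : ⨆ a : s, Order.succ a.1.1 < (Cardinal.aleph 1).ord := by
    refine (Ordinal.iSup_lt_omega_one fun a => ?_).trans_eq (Cardinal.ord_aleph 1).symm
    exact (Ordinal.succ_lt_aleph_one_ord a.1.2).trans_eq (Cardinal.ord_aleph 1)
  refine ⟨⟨_, hsup⟩, fun a ha => Subtype.coe_lt_coe.1 ?_⟩
  exact (Order.lt_succ _).trans_le (Ordinal.le_iSup (fun a : s => Order.succ a.1.1) ⟨a, ha⟩)

end SOmega

instance : NoMaxOrder (Ico (0 : ℝ) 1) :=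
  ⟨fun t => ⟨⟨(t + 1) / 2, by linarith [t.2.1], by linarith [t.2.2]⟩,
    Subtype.coe_lt_coe.1 (show (t : ℝ) < (t + 1) / 2 by linarith [t.2.2])⟩⟩

namespace LongLinePlus

instance inst_s17 : OrderBot LongLinePlus := inferInstanceAs (OrderBot (SOmega ×ₗ Ico (0 : ℝ) 1))

noncomputable instance : ConditionallyCompleteLinearOrder LongLinePlus :=
  letI : Inhabited (Ico (0 : ℝ) 1) := ⟨⊥⟩
  haveI : Nonempty LongLinePlus := ⟨⊥⟩
  .ofExistsIsLUB _ fun _ => Prod.Lex.exists_isLUB (α := SOmega) (β := Ico (0 : ℝ) 1)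

instance : NoMaxOrder LongLinePlus := inferInstanceAs (NoMaxOrder (SOmega ×ₗ Ico (0 : ℝ) 1))

instance : DenselyOrdered LongLinePlus :=
  inferInstanceAs (DenselyOrdered (SOmega ×ₗ Ico (0 : ℝ) 1))

def ratPoints : Set LongLinePlus :=
  {x : SOmega ×ₗ Ico (0 : ℝ) 1 | ((ofLex x).2 : ℝ) ∈ range ((↑) : ℚ → ℝ)}

theorem orderDense_ratPoints : OrderDense ratPoints :=
  OrderDense.prodLex (OrderDense.preimage_val orderDense_range_ratCast)

theorem countable_ratPoints_inter_Iic (u : LongLinePlus) : (ratPoints ∩ Iic u).Countable :=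
  Prod.Lex.countable_inter_Iic SOmega.countable_Iic
    ((countable_range _).preimage Subtype.val_injective) u

theorem exists_forall_lt_of_countable {s : Set LongLinePlus} (hs : s.Countable) :
    ∃ b, ∀ x ∈ s, x < b := by
  obtain ⟨a, ha⟩ := SOmega.exists_forall_lt_of_countable
    (hs.image fun x : SOmega ×ₗ Ico (0 : ℝ) 1 => (ofLex x).1)
  exact ⟨toLex (a, ⊥), fun x hx => Prod.Lex.lt_iff.2 (.inl (ha _ ⟨x, hx, rfl⟩))⟩

end LongLinePlus

namespace LongLinePlusPos

instance : OrdConnected {x : LongLinePlus | ∃ y, y < x} :=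
  ⟨fun _ ⟨y, hy⟩ _ _ _ hz => ⟨y, hy.trans_le hz.1⟩⟩

noncomputable instance : ConditionallyCompleteLinearOrder LongLinePlusPos :=
  letI : Inhabited {x : LongLinePlus | ∃ y, y < x} :=
    ⟨⟨(exists_gt ⊥).choose, ⊥, (exists_gt ⊥).choose_spec⟩⟩
  inferInstanceAs (ConditionallyCompleteLinearOrder {x : LongLinePlus | ∃ y, y < x})

instance : NoMaxOrder LongLinePlusPos where
  exists_gt := by
    rintro ⟨x, y, hyx⟩
    obtain ⟨z, hz⟩ := exists_gt x
    exact ⟨⟨z, y, hyx.trans hz⟩, hz⟩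

instance : NoMinOrder LongLinePlusPos where
  exists_lt := by
    rintro ⟨x, y, hyx⟩
    obtain ⟨z, hz, hzx⟩ := exists_between ((bot_le (a := y)).trans_lt hyx)
    exact ⟨⟨z, ⊥, hz⟩, hzx⟩

end LongLinePlusPos

namespace LongLine

noncomputable instance : ConditionallyCompleteLinearOrder LongLine :=
  haveI : Nonempty LongLine := ⟨toLex (Sum.inr (⊥ : LongLinePlus))⟩
  .ofExistsIsLUB _ fun _ => Sum.Lex.exists_isLUB (α := LongLinePlusPosᵒᵈ) (β := LongLinePlus)

instance : NoMaxOrder LongLine := inferInstanceAs (NoMaxOrder (LongLinePlusPosᵒᵈ ⊕ₗ LongLinePlus))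

instance : NoMinOrder LongLine := inferInstanceAs (NoMinOrder (LongLinePlusPosᵒᵈ ⊕ₗ LongLinePlus))

def ratPoints : Set LongLine :=
  {x : LongLinePlusPosᵒᵈ ⊕ₗ LongLinePlus |
    Sum.elim (fun p => Subtype.val (OrderDual.ofDual p) ∈ LongLinePlus.ratPoints)
      (· ∈ LongLinePlus.ratPoints) (ofLex x)}

theorem orderDense_ratPoints : OrderDense ratPoints :=
  OrderDense.sumLex (α := LongLinePlusPosᵒᵈ) (OrderDense.dual (OrderDense.preimage_val
    (S := {x : LongLinePlus | ∃ y, y < x}) LongLinePlus.orderDense_ratPoints))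
    LongLinePlus.orderDense_ratPoints

theorem countable_ratPoints_inter_Icc (x y : LongLine) : (ratPoints ∩ Icc x y).Countable := by
  refine Sum.Lex.countable_inter_Icc (α := LongLinePlusPosᵒᵈ) (fun a => ?_)
    LongLinePlus.countable_ratPoints_inter_Iic x y
  exact (LongLinePlus.countable_ratPoints_inter_Iic (Subtype.val (OrderDual.ofDual a))).preimage
    (Subtype.val_injective.comp OrderDual.ofDual.injective)

theorem bddAbove_of_countable {s : Set LongLine} (hs : s.Countable) : BddAbove s := by
  obtain ⟨b, hb⟩ := LongLinePlus.exists_forall_lt_of_countable (hs.preimage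
    (f := fun q => (toLex (Sum.inr q) : LongLinePlusPosᵒᵈ ⊕ₗ LongLinePlus))
    (toLex.injective.comp Sum.inr_injective))
  refine ⟨toLex (Sum.inr b), ?_⟩
  rintro (p | q) hx
  · exact Sum.Lex.inl_le_inr _ _
  · exact Sum.Lex.inr_le_inr_iff.2 (hb q hx).le

theorem bddBelow_of_countable {s : Set LongLine} (hs : s.Countable) : BddBelow s := by
  set N : Set LongLinePlusPos :=
    {p | (toLex (Sum.inl (OrderDual.toDual p)) : LongLinePlusPosᵒᵈ ⊕ₗ LongLinePlus) ∈ s}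
  have hN : N.Countable := hs.preimage (toLex.injective.comp Sum.inl_injective)
  obtain ⟨b, hb⟩ := LongLinePlus.exists_forall_lt_of_countable ((hN.image Subtype.val).insert ⊥)
  refine ⟨toLex (Sum.inl (OrderDual.toDual
    (show LongLinePlusPos from ⟨b, ⊥, hb ⊥ (.inl rfl)⟩))), ?_⟩
  rintro (p | q) hx
  · exact Sum.Lex.inl_le_inl_iff.2 (hb _ (.inr ⟨_, hx, rfl⟩)).le
  · exact Sum.Lex.inl_le_inr _ _

theorem toBar_injective : Function.Injective LongLine.toBar :=
  fun _ _ h => WithTop.coe_injective (WithBot.coe_injective h)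

theorem toBar_le_toBar {x y : LongLine} : x.toBar ≤ y.toBar ↔ x ≤ y :=
  WithBot.coe_le_coe.trans WithTop.coe_le_coe

theorem toBar_lt_toBar {x y : LongLine} : x.toBar < y.toBar ↔ x < y :=
  WithBot.coe_lt_coe.trans WithTop.coe_lt_coe

theorem range_toBar : range LongLine.toBar = Ioo ⊥ ⊤ := by
  ext w
  constructor
  · rintro ⟨x, rfl⟩
    exact ⟨WithBot.bot_lt_coe _, WithBot.coe_lt_coe.2 (WithTop.coe_lt_top x)⟩
  · rintro ⟨h₁, h₂⟩
    rcases w with _ | _ | x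
    · exact absurd h₁ (lt_irrefl _)
    · exact absurd h₂ (lt_irrefl _)
    · exact ⟨x, rfl⟩

end LongLine

namespace LongLineBar

noncomputable instance : CompleteLinearOrder LongLineBar :=
  inferInstanceAs (CompleteLinearOrder (WithBot (WithTop LongLine)))

instance : Nontrivial LongLineBar := ⟨⟨⊥, ⊤, WithBot.bot_ne_coe⟩⟩

def ratPoints : Set LongLineBar := LongLine.toBar '' LongLine.ratPoints

theorem orderDense_ratPoints : OrderDense ratPoints := by
  have := LongLine.orderDense_ratPoints.image_coe_withTop.image_coe_withBot
  rwa [image_image] at this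

instance : DenselyOrdered LongLineBar :=
  ⟨fun _ _ hab => let ⟨c, _, hc⟩ := orderDense_ratPoints hab; ⟨c, hc⟩⟩

theorem isSeparable_Icc_toBar (x y : LongLine) : IsSeparable (Icc x.toBar y.toBar) := by
  obtain ⟨l, hl⟩ := exists_lt x
  obtain ⟨u, hu⟩ := exists_gt y
  refine ((LongLine.countable_ratPoints_inter_Icc l u).image
    LongLine.toBar).isSeparable.closure.mono ?_
  calc Icc x.toBar y.toBar
      ⊆ Ioo l.toBar u.toBar :=
        Icc_subset_Ioo (LongLine.toBar_lt_toBar.2 hl) (LongLine.toBar_lt_toBar.2 hu)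
    _ ⊆ closure (Ioo l.toBar u.toBar ∩ ratPoints) :=
        (dense_of_exists_between orderDense_ratPoints).open_subset_closure_inter isOpen_Ioo
    _ ⊆ closure (LongLine.toBar '' (LongLine.ratPoints ∩ Icc l u)) := by
        refine closure_mono ?_
        rintro _ ⟨⟨h₁, h₂⟩, z, hz, rfl⟩
        exact ⟨z, ⟨hz, LongLine.toBar_le_toBar.1 h₁.le, LongLine.toBar_le_toBar.1 h₂.le⟩, rfl⟩

theorem exists_subset_Icc_union_of_countable {c : Set LongLineBar} (hc : c.Countable) :
    ∃ l u : LongLine, c ⊆ Icc l.toBar u.toBar ∪ {⊥, ⊤} := by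
  have hc' : (LongLine.toBar ⁻¹' c).Countable := hc.preimage LongLine.toBar_injective
  obtain ⟨l, hl⟩ := LongLine.bddBelow_of_countable hc'
  obtain ⟨u, hu⟩ := LongLine.bddAbove_of_countable hc'
  refine ⟨l, u, fun w hw => ?_⟩
  by_cases hw' : w ∈ Ioo ⊥ ⊤
  · obtain ⟨x, rfl⟩ := LongLine.range_toBar.symm ▸ hw'
    exact .inl ⟨LongLine.toBar_le_toBar.2 (hl hw), LongLine.toBar_le_toBar.2 (hu hw)⟩
  · exact .inr (notMem_Ioo_bot_top_iff.1 hw')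

theorem subsingleton_of_isPreconnected_of_isSeparable {S : Set LongLineBar} {a : LongLineBar}
    (hS : IsPreconnected S) (hsep : IsSeparable S) (haS : a ∈ S) (ha : a ∉ Ioo ⊥ ⊤) :
    S.Subsingleton := by
  obtain ⟨c, hc, hSc⟩ := hsep
  obtain ⟨l, u, hcK⟩ := exists_subset_Icc_union_of_countable hc
  have hSK : S ⊆ Icc l.toBar u.toBar ∪ {⊥, ⊤} :=
    hSc.trans (closure_minimal hcK (isClosed_Icc.union (toFinite _).isClosed))
  rcases notMem_Ioo_bot_top_iff.1 ha with rfl | rfl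
  · refine subsingleton_singleton.anti <| IsPreconnected.subset_singleton_of_subset_insert_Iic
      (X := LongLineBarᵒᵈ) hS haS (u := OrderDual.toDual l.toBar) (WithBot.bot_lt_coe _)
      fun w hw => ?_
    rcases hSK hw with hw | rfl | rfl
    · exact .inr hw.1
    · exact .inl rfl
    · exact .inr (show l.toBar ≤ ⊤ from le_top)
  · refine subsingleton_singleton.anti <| hS.subset_singleton_of_subset_insert_Iic haS
      (WithBot.coe_lt_coe.2 (WithTop.coe_lt_top u)) fun w hw => ?_
    rcases hSK hw with hw | rfl | rfl
    · exact .inr hw.2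
    · exact .inr (show ⊥ ≤ u.toBar from bot_le)
    · exact .inl rfl

theorem nontrivial_Ioo_bot_top : (Ioo (⊥ : LongLineBar) ⊤).Nontrivial := by
  obtain ⟨a, ha⟩ := exists_between (bot_lt_top : (⊥ : LongLineBar) < ⊤)
  obtain ⟨b, hb⟩ := exists_between ha.2
  exact ⟨a, ha, b, ⟨ha.1.trans hb.1, hb.2⟩, hb.1.ne⟩

theorem separableComponent_eq_Ioo_of_mem {a : LongLineBar} (ha : a ∈ Ioo ⊥ ⊤) :
    separableComponent a = Ioo ⊥ ⊤ := by
  refine Subset.antisymm (fun y hy => ?_) fun y hy => ?_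
  · obtain ⟨C, haC, hyC, hC, hCs⟩ := mem_separableComponent_iff.1 hy
    by_contra hy'
    exact hy' (subsingleton_of_isPreconnected_of_isSeparable hC hCs hyC hy' haC hyC ▸ ha)
  · rw [← LongLine.range_toBar] at ha hy
    obtain ⟨x, rfl⟩ := ha
    obtain ⟨x', rfl⟩ := hy
    refine mem_separableComponent_iff.2 ⟨Icc (min x x').toBar (max x x').toBar, ?_, ?_,
      isPreconnected_Icc, isSeparable_Icc_toBar _ _⟩
    · exact ⟨LongLine.toBar_le_toBar.2 (min_le_left _ _),
        LongLine.toBar_le_toBar.2 (le_max_left _ _)⟩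
    · exact ⟨LongLine.toBar_le_toBar.2 (min_le_right _ _),
        LongLine.toBar_le_toBar.2 (le_max_right _ _)⟩

theorem separableComponent_eq_singleton_of_notMem {a : LongLineBar} (ha : a ∉ Ioo ⊥ ⊤) :
    separableComponent a = {a} := by
  refine (singleton_subset_iff.2 (mem_separableComponent_self a)).antisymm' fun y hy => ?_
  obtain ⟨C, haC, hyC, hC, hCs⟩ := mem_separableComponent_iff.1 hy
  exact subsingleton_of_isPreconnected_of_isSeparable hC hCs haC ha hyC haC

theorem closure_separableComponent_eq_univ_of_mem {a : LongLineBar} (ha : a ∈ Ioo ⊥ ⊤) :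
    closure (separableComponent a) = univ := by
  rw [separableComponent_eq_Ioo_of_mem ha, closure_Ioo bot_ne_top, Icc_bot_top]

open Function

theorem subsingleton_separableComponent_iff {ι : Type*} [Countable ι] {x : ι → LongLineBar} :
    (separableComponent x).Subsingleton ↔ ∀ i, x i = ⊥ ∨ x i = ⊤ := by
  classical
  refine ⟨fun hx i => ?_, fun hx => ?_⟩
  · by_contra hi
    rw [← notMem_Ioo_bot_top_iff, not_not] at hi
    obtain ⟨b, hb, hbx⟩ := nontrivial_Ioo_bot_top.exists_ne (x i)
    have hxb : update x i b ∈ separableComponent x := by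
      rw [separableComponent_pi]
      intro j _
      rcases eq_or_ne j i with rfl | hj
      · simpa [separableComponent_eq_Ioo_of_mem hi] using hb
      · simpa [hj] using mem_separableComponent_self (x j)
    exact hbx (by simpa using congrFun (hx hxb (mem_separableComponent_self x)) i)
  · simp_rw [separableComponent_pi, separableComponent_eq_singleton_of_notMem
      (notMem_Ioo_bot_top_iff.2 (hx _)), univ_pi_singleton]
    exact subsingleton_singleton

theorem separablyAdjacent_iff {ι : Type*} [Countable ι] {x y : ι → LongLineBar}
    (hx : ∀ i, x i = ⊥ ∨ x i = ⊤) : SeparablyAdjacent x y ↔ ∃! i, x i ≠ y i := by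
  classical
  constructor
  · rintro ⟨hxy, z, hxz, hyz, hcut⟩
    rw [separableComponent_pi, closure_pi_set] at hxz hyz
    have hfix : ∀ j, z j ∉ Ioo ⊥ ⊤ → x j = y j := fun j hj => by
      have hxj : x j ∈ closure (separableComponent (z j)) := hxz j trivial
      have hyj : y j ∈ closure (separableComponent (z j)) := hyz j trivial
      rw [separableComponent_eq_singleton_of_notMem hj, closure_singleton] at hxj hyj
      exact hxj.trans hyj.symm
    have hmem : ∀ j, x j ≠ y j → z j ∈ Ioo ⊥ ⊤ := fun j hj => by_contra fun h => hj (hfix j h)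
    have huniq : ∀ i j, z i ∈ Ioo ⊥ ⊤ → z j ∈ Ioo ⊥ ⊤ → i = j := by
      refine fun i j hi hj => by_contra fun hij => hcut z (mem_separableComponent_self z) ?_
      rw [separableComponent_pi]
      refine isPreconnected_univ_pi_diff_singleton (fun k => isPreconnected_separableComponent _)
        hij ?_ ?_ fun k _ => mem_separableComponent_self (z k)
      · exact separableComponent_eq_Ioo_of_mem hi ▸ nontrivial_Ioo_bot_top
      · exact separableComponent_eq_Ioo_of_mem hj ▸ nontrivial_Ioo_bot_top
    obtain ⟨i, hi⟩ := Function.ne_iff.1 hxy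
    exact ⟨i, hi, fun j hj => huniq j i (hmem j hj) (hmem i hi)⟩
  · rintro ⟨i, hi, huniq⟩
    obtain ⟨m, hm⟩ := nontrivial_Ioo_bot_top.nonempty
    set z := update x i m
    have hzj : ∀ j ≠ i, z j ∉ Ioo ⊥ ⊤ := fun j hj => by
      simpa [z, hj] using notMem_Ioo_bot_top_iff.2 (hx j)
    have hzi : z i ∈ Ioo ⊥ ⊤ := by simpa [z] using hm
    have hclosure : ∀ v : ι → LongLineBar, (∀ j ≠ i, v j = x j) →
        v ∈ closure (separableComponent z) := fun v hv => by
      rw [separableComponent_pi, closure_pi_set]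
      intro j _
      show v j ∈ closure (separableComponent (z j))
      rcases eq_or_ne j i with rfl | hj
      · rw [closure_separableComponent_eq_univ_of_mem hzi]
        trivial
      · rw [separableComponent_eq_singleton_of_notMem (hzj j hj), closure_singleton, hv j hj]
        simp [z, hj]
    refine ⟨Function.ne_iff.2 ⟨i, hi⟩, z, hclosure x fun _ _ => rfl,
      hclosure y fun j hj => by_contra fun h => hj (huniq j (Ne.symm h)), ?_⟩
    rw [separableComponent_pi]
    intro w hw
    have hwi : w i ∈ Ioo ⊥ ⊤ := separableComponent_eq_Ioo_of_mem hzi ▸ hw i trivial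
    obtain ⟨a, ha, haw⟩ := exists_between hwi.1
    obtain ⟨b, hwb, hb⟩ := exists_between hwi.2
    refine not_isPreconnected_univ_pi_diff_singleton (i := i) (fun j hj => ?_) hw ?_ ?_ haw hwb
    · rw [separableComponent_eq_singleton_of_notMem (hzj j hj)]
      exact subsingleton_singleton
    · rw [separableComponent_eq_Ioo_of_mem hzi]
      exact ⟨ha, haw.trans hwi.2⟩
    · rw [separableComponent_eq_Ioo_of_mem hzi]
      exact ⟨hwi.1.trans hwb, hb⟩

end LongLineBar

/-- Any homeomorphism `h` of `L̄ⁿ` maps the set `W = {-Ω, Ω}ⁿ` onto itself, and the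
induced permutation of `W` preserves adjacency in the hypercube graph, where `p, q ∈ W`
are adjacent iff they differ in exactly one coordinate. -/
theorem longLineBar_pow_homeomorph_hypercube (n : ℕ)
    (h : (Fin n → LongLineBar) ≃ₜ (Fin n → LongLineBar)) :
    (h '' {x | ∀ i, x i = ⊥ ∨ x i = ⊤} = {x | ∀ i, x i = ⊥ ∨ x i = ⊤}) ∧
    ∀ x y : Fin n → LongLineBar, (∀ i, x i = ⊥ ∨ x i = ⊤) → (∀ i, y i = ⊥ ∨ y i = ⊤) →
      ((∃! i, x i ≠ y i) ↔ (∃! i, h x i ≠ h y i)) := by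
  have hW : ∀ x, (∀ i, h x i = ⊥ ∨ h x i = ⊤) ↔ ∀ i, x i = ⊥ ∨ x i = ⊤ := fun x => by
    rw [← LongLineBar.subsingleton_separableComponent_iff,
      ← LongLineBar.subsingleton_separableComponent_iff, ← h.image_separableComponent,
      h.injective.subsingleton_image_iff]
  refine ⟨ext fun y => ⟨?_, fun hy => ⟨h.symm y, ?_, h.apply_symm_apply y⟩⟩, fun x y hx _ => ?_⟩
  · rintro ⟨x, hx, rfl⟩
    exact (hW x).2 hx
  · exact (hW _).1 (by simpa using hy)
  · rw [← LongLineBar.separablyAdjacent_iff hx, ← LongLineBar.separablyAdjacent_iff ((hW x).2 hx),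
      h.separablyAdjacent_iff]
end
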